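/- Let b_x = Γ_p Γ_x + Γ_q Γ_x and, for θ ∈ ℝ, B_θ = I₄ + (θ/2) • b_x. Then for all real x, p, q: B_θ (x•Γ_x + p•Γ_p + q•Γ_q) B_{−θ} = (x + (p−q)θ)•Γ_x + (p + xθ + (p−q)θ²/2)•Γ_p + (q + xθ + (p−q)θ²/2)•Γ_q, and B_θ Γ_c B_{−θ} = Γ_c for c ∈ {t, y, z}. -/

import Mathlib

open Quaternion Matrix

/-- The split quaternions, with K = i, L = j, KL = k. -/
notation "ℍ'" => QuaternionAlgebra ℝ (-1) 0 1

/-- A = ℍ' ⊗_ℝ ℂ, realized as the quaternion algebra over ℂ with i² = −1, j² = 1. -/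
abbrev SplitQC := QuaternionAlgebra ℂ (-1) 0 1

namespace SplitQC
/-- K, the split-quaternion unit with K² = −1 -/
def K : SplitQC := ⟨0, 1, 0, 0⟩
/-- L, the split-quaternion unit with L² = 1 -/
def L : SplitQC := ⟨0, 0, 1, 0⟩
/-- KL, with (KL)² = 1 -/
def KL : SplitQC := ⟨0, 0, 0, 1⟩
/-- ℓ = 1 ⊗ i, the complex unit -/
def ll : SplitQC := ⟨Complex.I, 0, 0, 0⟩
end SplitQC

open SplitQC

/-- Index set {x, y, z, t, q, p} for the gamma matrices. -/
inductive Idx | x | y | z | t | q | p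
deriving DecidableEq

/-- The gamma matrices generating Cl(4,2). -/
def Γ : Idx → Matrix (Fin 4) (Fin 4) SplitQC
| Idx.x => !![0,0,0,1; 0,0,1,0; 0,1,0,0; 1,0,0,0]
| Idx.y => !![0,0,0,-ll; 0,0,ll,0; 0,-ll,0,0; ll,0,0,0]
| Idx.z => !![0,0,1,0; 0,0,0,-1; 1,0,0,0; 0,-1,0,0]
| Idx.t => !![0,0,L,0; 0,0,0,L; -L,0,0,0; 0,-L,0,0]
| Idx.q => !![0,0,K,0; 0,0,0,K; -K,0,0,0; 0,-K,0,0]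
| Idx.p => !![0,0,KL,0; 0,0,0,KL; -KL,0,0,0; 0,-KL,0,0]

/-- The metric of signature (4,2). -/
def g : Idx → Idx → ℝ
| Idx.x, Idx.x => 1 | Idx.y, Idx.y => 1 | Idx.z, Idx.z => 1 | Idx.q, Idx.q => 1
| Idx.t, Idx.t => -1 | Idx.p, Idx.p => -1
| _, _ => 0

/-!
Put `n = Γ_p + Γ_q`. The Clifford relations of the `Γ`'s make `n` null and anticommuting with
`Γ_x`, so `b_x = n Γ_x` squares to zero and conjugation by `B_θ = 1 + (θ/2) b_x` is
`u ↦ u + (θ/2)[b_x, u] - (θ/2)² b_x u b_x`. For `u` anticommuting with `Γ_x` and with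
`n u + u n = 2k`, this is `u - θk Γ_x - (θ²k/2) n`, and `Γ_x` itself goes to `Γ_x + θ n`.
The values `k = -1, 1, 0` for `Γ_p`, `Γ_q` and `Γ_t, Γ_y, Γ_z` give the theorem by linearity.
-/

section NullRotor

variable {S R : Type*} [CommRing S] [Ring R] [Algebra S R]

theorem one_add_smul_mul_mul_one_add_neg_smul (c : S) (b u : R) :
    (1 + c • b) * u * (1 + (-c) • b) = u + c • (b * u - u * b) - c ^ 2 • (b * u * b) := by
  simp only [add_mul, mul_add, one_mul, mul_one, smul_mul_assoc, mul_smul_comm]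
  module

variable {n e u : R} {k : S}

theorem mul_sub_mul_of_anticomm (hue : u * e + e * u = 0) (hnu : n * u + u * n = (2 * k) • 1) :
    n * e * u - u * (n * e) = -(2 * k) • e := by
  have heu : e * u = -(u * e) := eq_neg_of_add_eq_zero_right hue
  calc n * e * u - u * (n * e) = -((n * u + u * n) * e) := by
        rw [mul_assoc n, heu]; noncomm_ring
    _ = -(2 * k) • e := by rw [hnu, smul_one_mul, neg_smul]

theorem mul_mul_mul_of_anticomm (he : e * e = 1) (hn : n * n = 0) (hne : n * e + e * n = 0)
    (hue : u * e + e * u = 0) (hnu : n * u + u * n = (2 * k) • 1) :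
    n * e * u * (n * e) = (2 * k) • n := by
  have heu : e * u = -(u * e) := eq_neg_of_add_eq_zero_right hue
  have hen : e * n = -(n * e) := eq_neg_of_add_eq_zero_right hne
  have hun : u * n = (2 * k) • 1 - n * u := eq_sub_of_add_eq' hnu
  calc n * e * u * (n * e) = n * (e * u) * n * e := by noncomm_ring
    _ = -(n * u * (e * n) * e) := by rw [heu]; noncomm_ring
    _ = n * (u * n) * (e * e) := by rw [hen]; noncomm_ring
    _ = (2 * k) • n := by
        rw [hun, he, mul_sub, ← mul_assoc, hn, mul_smul_comm, mul_one]; simp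

theorem conj_null_rotor_of_anticomm (c : S) (he : e * e = 1) (hn : n * n = 0)
    (hne : n * e + e * n = 0) (hue : u * e + e * u = 0) (hnu : n * u + u * n = (2 * k) • 1) :
    (1 + c • (n * e)) * u * (1 + (-c) • (n * e)) = u - (2 * c * k) • e - (2 * c ^ 2 * k) • n := by
  rw [one_add_smul_mul_mul_one_add_neg_smul, mul_sub_mul_of_anticomm hue hnu,
    mul_mul_mul_of_anticomm he hn hne hue hnu]
  module

theorem conj_null_rotor_self (c : S) (he : e * e = 1) (hn : n * n = 0)
    (hne : n * e + e * n = 0) :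
    (1 + c • (n * e)) * e * (1 + (-c) • (n * e)) = e + (2 * c) • n := by
  have hen : e * n = -(n * e) := eq_neg_of_add_eq_zero_right hne
  have hcomm : n * e * e - e * (n * e) = 2 • n := by
    rw [mul_assoc, he, ← mul_assoc, hen, neg_mul, mul_assoc, he]; noncomm_ring
  have hsandwich : n * e * e * (n * e) = 0 := by
    rw [mul_assoc n, he, mul_one, ← mul_assoc, hn, zero_mul]
  rw [one_add_smul_mul_mul_one_add_neg_smul, hcomm, hsandwich]
  module

end NullRotor

namespace SplitQC
@[simp] lemma K_mul_K : K * K = -1 := by ext <;> simp [K]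
@[simp] lemma K_mul_L : K * L = KL := by ext <;> simp [K, L, KL]
@[simp] lemma L_mul_K : L * K = -KL := by ext <;> simp [K, L, KL]
@[simp] lemma L_mul_L : L * L = 1 := by ext <;> simp [L]
@[simp] lemma K_mul_KL : K * KL = -L := by ext <;> simp [K, L, KL]
@[simp] lemma KL_mul_K : KL * K = L := by ext <;> simp [K, L, KL]
@[simp] lemma L_mul_KL : L * KL = -K := by ext <;> simp [K, L, KL]
@[simp] lemma KL_mul_L : KL * L = K := by ext <;> simp [K, L, KL]
@[simp] lemma KL_mul_KL : KL * KL = 1 := by ext <;> simp [KL]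
@[simp] lemma ll_mul_ll : ll * ll = -1 := by ext <;> simp [ll]
@[simp] lemma K_mul_ll : K * ll = ll * K := by ext <;> simp [K, ll]
@[simp] lemma L_mul_ll : L * ll = ll * L := by ext <;> simp [L, ll]
@[simp] lemma KL_mul_ll : KL * ll = ll * KL := by ext <;> simp [KL, ll]
end SplitQC

theorem Γ_mul_Γ_add_Γ_mul_Γ (a b : Idx) : Γ a * Γ b + Γ b * Γ a = (2 * g a b) • 1 := by
  cases a <;> cases b <;> simp [Γ, g] <;>
    refine Matrix.ext fun i j => ?_ <;> fin_cases i <;> fin_cases j <;>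
    simp [two_smul]

theorem Γ_mul_self (a : Idx) : Γ a * Γ a = g a a • 1 := by
  have h := Γ_mul_Γ_add_Γ_mul_Γ a a
  rw [← two_smul ℝ (Γ a * Γ a), mul_smul] at h
  exact smul_right_injective _ two_ne_zero h

theorem Γ_p_add_Γ_q_mul_self : (Γ Idx.p + Γ Idx.q) * (Γ Idx.p + Γ Idx.q) = 0 := by
  calc (Γ Idx.p + Γ Idx.q) * (Γ Idx.p + Γ Idx.q)
        = Γ Idx.p * Γ Idx.p + Γ Idx.q * Γ Idx.q + (Γ Idx.p * Γ Idx.q + Γ Idx.q * Γ Idx.p) := by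
          noncomm_ring
    _ = 0 := by simp [Γ_mul_self, Γ_mul_Γ_add_Γ_mul_Γ, g]

theorem Γ_p_add_Γ_q_mul_Γ_add (a : Idx) :
    (Γ Idx.p + Γ Idx.q) * Γ a + Γ a * (Γ Idx.p + Γ Idx.q) = (2 * (g Idx.p a + g Idx.q a)) • 1 := by
  rw [mul_add (2 : ℝ), add_smul, ← Γ_mul_Γ_add_Γ_mul_Γ, ← Γ_mul_Γ_add_Γ_mul_Γ, add_mul, mul_add]
  abel

theorem Γ_anticomm_Γ_x {a : Idx} (ha : a ≠ Idx.x) : Γ a * Γ Idx.x + Γ Idx.x * Γ a = 0 := by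
  rw [Γ_mul_Γ_add_Γ_mul_Γ]; cases a <;> simp_all [g]

/-- The null rotation B_θ = I + (θ/2)(Γ_p Γ_x + Γ_q Γ_x) (a conformal translation)
acts on the x, p, q coefficients as stated, fixing Γ_t, Γ_y, Γ_z. -/
theorem conformal_translation_action (θ x p q : ℝ) :
    let bx := Γ Idx.p * Γ Idx.x + Γ Idx.q * Γ Idx.x
    let B : ℝ → Matrix (Fin 4) (Fin 4) SplitQC := fun s => 1 + (s / 2) • bx
    (B θ * (x • Γ Idx.x + p • Γ Idx.p + q • Γ Idx.q) * B (-θ) =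
      (x + (p - q) * θ) • Γ Idx.x +
      (p + x * θ + (p - q) * θ ^ 2 / 2) • Γ Idx.p +
      (q + x * θ + (p - q) * θ ^ 2 / 2) • Γ Idx.q) ∧
    (∀ c : Idx, c = Idx.t ∨ c = Idx.y ∨ c = Idx.z → B θ * Γ c * B (-θ) = Γ c) := by
  intro bx B
  have hB (s : ℝ) : B s = 1 + (s / 2) • ((Γ Idx.p + Γ Idx.q) * Γ Idx.x) := by
    simp only [B, bx, add_mul]
  have he : Γ Idx.x * Γ Idx.x = 1 := by simp [Γ_mul_self, g]
  have hne : (Γ Idx.p + Γ Idx.q) * Γ Idx.x + Γ Idx.x * (Γ Idx.p + Γ Idx.q) = 0 := by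
    simp [Γ_p_add_Γ_q_mul_Γ_add, g]
  have hconj {a : Idx} (ha : a ≠ Idx.x) : B θ * Γ a * B (-θ) = Γ a
      - (θ * (g Idx.p a + g Idx.q a)) • Γ Idx.x
      - (θ ^ 2 / 2 * (g Idx.p a + g Idx.q a)) • (Γ Idx.p + Γ Idx.q) := by
    rw [hB, hB, neg_div, conj_null_rotor_of_anticomm _ he Γ_p_add_Γ_q_mul_self hne
      (Γ_anticomm_Γ_x ha) (Γ_p_add_Γ_q_mul_Γ_add a)]
    module
  refine ⟨?_, ?_⟩
  · have hx : B θ * Γ Idx.x * B (-θ) = Γ Idx.x + θ • (Γ Idx.p + Γ Idx.q) := by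
      rw [hB, hB, neg_div, conj_null_rotor_self _ he Γ_p_add_Γ_q_mul_self hne]
      module
    simp only [mul_add, add_mul, mul_smul_comm, smul_mul_assoc]
    rw [hx, hconj (by decide), hconj (by decide)]
    simp only [g]
    module
  · rintro c (rfl | rfl | rfl) <;> simp [hconj, g]
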